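/- A PDL formula φ in negation normal form is satisfiable if and only if there exists a Hintikka structure for φ. -/

import Mathlib

mutual
  inductive Fml : Type
    | atom : ℕ → Fml
    | neg  : Fml → Fml
    | and  : Fml → Fml → Fml
    | or   : Fml → Fml → Fml
    | dia  : Prg → Fml → Fml
    | box  : Prg → Fml → Fml
  inductive Prg : Type
    | atom  : ℕ → Prg
    | seq   : Prg → Prg → Prg
    | union : Prg → Prg → Prg
    | star  : Prg → Prg
    | test  : Fml → Prg
end

/-- A PDL model: worlds, relations for atomic programs, valuation. -/
structure Model where
  W : Type
  R : ℕ → W → W → Prop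
  V : ℕ → W → Prop

mutual
  /-- Truth of a formula at a world. -/
  def Model.sat (M : Model) : M.W → Fml → Prop
    | w, .atom p  => M.V p w
    | w, .neg φ   => ¬ M.sat w φ
    | w, .and φ ψ => M.sat w φ ∧ M.sat w ψ
    | w, .or φ ψ  => M.sat w φ ∨ M.sat w ψ
    | w, .dia α φ => ∃ v, M.rel α w v ∧ M.sat v φ
    | w, .box α φ => ∀ v, M.rel α w v → M.sat v φ
  /-- Interpretation of programs as binary relations. -/
  def Model.rel (M : Model) : Prg → M.W → M.W → Prop
    | .atom a, w, v    => M.R a w v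
    | .seq α β, w, v   => ∃ u, M.rel α w u ∧ M.rel β u v
    | .union α β, w, v => M.rel α w v ∨ M.rel β w v
    | .star α, w, v    => Relation.ReflTransGen (fun x y => M.rel α x y) w v
    | .test φ, w, v    => w = v ∧ M.sat w φ
end

mutual
  /-- Negation normal form: negation only immediately before atoms. -/
  inductive IsNNF : Fml → Prop
    | atom (p : ℕ) : IsNNF (.atom p)
    | natom (p : ℕ) : IsNNF (.neg (.atom p))
    | and {φ ψ : Fml} : IsNNF φ → IsNNF ψ → IsNNF (.and φ ψ)
    | or {φ ψ : Fml} : IsNNF φ → IsNNF ψ → IsNNF (.or φ ψ)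
    | dia {α : Prg} {φ : Fml} : IsNNFp α → IsNNF φ → IsNNF (.dia α φ)
    | box {α : Prg} {φ : Fml} : IsNNFp α → IsNNF φ → IsNNF (.box α φ)
  inductive IsNNFp : Prg → Prop
    | atom (a : ℕ) : IsNNFp (.atom a)
    | seq {α β : Prg} : IsNNFp α → IsNNFp β → IsNNFp (.seq α β)
    | union {α β : Prg} : IsNNFp α → IsNNFp β → IsNNFp (.union α β)
    | star {α : Prg} : IsNNFp α → IsNNFp (.star α)
    | test {φ : Fml} : IsNNF φ → IsNNFp (.test φ)
end

/-- The reduction relation ⇝ on diamond formulae. -/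
inductive Red : Fml → Fml → Prop
  | seq (α β : Prg) (χ : Fml) : Red (.dia (.seq α β) χ) (.dia α (.dia β χ))
  | unionL (α β : Prg) (χ : Fml) : Red (.dia (.union α β) χ) (.dia α χ)
  | unionR (α β : Prg) (χ : Fml) : Red (.dia (.union α β) χ) (.dia β χ)
  | star1 (α : Prg) (χ : Fml) : Red (.dia (.star α) χ) χ
  | star2 (α : Prg) (χ : Fml) : Red (.dia (.star α) χ) (.dia α (.dia (.star α) χ))
  | test (ψ χ : Fml) : Red (.dia (.test ψ) χ) χ

/-- Pre φ : formulae of the form ⟨β₁⟩…⟨β_m⟩φ with m ≥ 0. -/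
inductive Pre (φ : Fml) : Fml → Prop
  | base : Pre φ φ
  | dia (α : Prg) {ψ : Fml} : Pre φ ψ → Pre φ (.dia α ψ)

mutual
  /-- Negation normal form of a formula. -/
  def nnf : Fml → Fml
    | .atom p => .atom p
    | .neg φ => nneg φ
    | .and φ ψ => .and (nnf φ) (nnf ψ)
    | .or φ ψ => .or (nnf φ) (nnf ψ)
    | .dia α φ => .dia (nnfp α) (nnf φ)
    | .box α φ => .box (nnfp α) (nnf φ)
  /-- nnf of the negation of a formula. -/
  def nneg : Fml → Fml
    | .atom p => .neg (.atom p)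
    | .neg φ => nnf φ
    | .and φ ψ => .or (nneg φ) (nneg ψ)
    | .or φ ψ => .and (nneg φ) (nneg ψ)
    | .dia α φ => .box (nnfp α) (nneg φ)
    | .box α φ => .dia (nnfp α) (nneg φ)
  def nnfp : Prg → Prg
    | .atom a => .atom a
    | .seq α β => .seq (nnfp α) (nnfp β)
    | .union α β => .union (nnfp α) (nnfp β)
    | .star α => .star (nnfp α)
    | .test φ => .test (nnf φ)
end

/-- A structure: worlds, relations for atomic programs, labelling. -/
structure Str where
  W : Type
  R : ℕ → W → W → Prop
  L : W → Set Fml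

/-- A fulfilling chain for (φ, β, w) in the structure S. -/
def FulfillingChain (S : Str) (φ : Fml) (β : Prg) (w : S.W) : Prop :=
  ∃ (n : ℕ) (ws : ℕ → S.W) (ψs : ℕ → Fml),
    (∀ i ≤ n, Pre φ (ψs i) ∧ ψs i ∈ S.L (ws i)) ∧
    ws 0 = w ∧ ψs 0 = .dia β φ ∧ ψs n = φ ∧ (∀ i < n, ψs i ≠ φ) ∧
    (∀ i < n,
      (∀ (a : ℕ) (χ : Fml), ψs i = Fml.dia (.atom a) χ →
          ψs (i+1) = χ ∧ S.R a (ws i) (ws (i+1))) ∧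
      ((∀ (a : ℕ) (χ : Fml), ψs i ≠ Fml.dia (.atom a) χ) →
          Red (ψs i) (ψs (i+1)) ∧ ws i = ws (i+1)))

/-- Hintikka structure: conditions H1–H6. -/
def Hintikka (S : Str) : Prop :=
  ∀ w : S.W,
    -- H1
    (∀ p : ℕ, Fml.neg (.atom p) ∈ S.L w → Fml.atom p ∉ S.L w) ∧
    -- H2 (α-formulae)
    (∀ φ ψ : Fml, Fml.and φ ψ ∈ S.L w → φ ∈ S.L w ∧ ψ ∈ S.L w) ∧
    (∀ (α β : Prg) (φ : Fml), Fml.box (.union α β) φ ∈ S.L w →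
        Fml.box α φ ∈ S.L w ∧ Fml.box β φ ∈ S.L w) ∧
    (∀ (α : Prg) (φ : Fml), Fml.box (.star α) φ ∈ S.L w →
        φ ∈ S.L w ∧ Fml.box α (.box (.star α) φ) ∈ S.L w) ∧
    (∀ ψ φ : Fml, Fml.dia (.test ψ) φ ∈ S.L w → φ ∈ S.L w ∧ ψ ∈ S.L w) ∧
    (∀ (α β : Prg) (φ : Fml), Fml.dia (.seq α β) φ ∈ S.L w →
        Fml.dia α (.dia β φ) ∈ S.L w) ∧
    (∀ (α β : Prg) (φ : Fml), Fml.box (.seq α β) φ ∈ S.L w →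
        Fml.box α (.box β φ) ∈ S.L w) ∧
    -- H3 (β-formulae)
    (∀ φ ψ : Fml, Fml.or φ ψ ∈ S.L w → φ ∈ S.L w ∨ ψ ∈ S.L w) ∧
    (∀ (α β : Prg) (φ : Fml), Fml.dia (.union α β) φ ∈ S.L w →
        Fml.dia α φ ∈ S.L w ∨ Fml.dia β φ ∈ S.L w) ∧
    (∀ (α : Prg) (φ : Fml), Fml.dia (.star α) φ ∈ S.L w →
        φ ∈ S.L w ∨ Fml.dia α (.dia (.star α) φ) ∈ S.L w) ∧
    (∀ ψ φ : Fml, Fml.box (.test ψ) φ ∈ S.L w → nneg ψ ∈ S.L w ∨ φ ∈ S.L w) ∧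
    -- H4
    (∀ (a : ℕ) (φ : Fml), Fml.dia (.atom a) φ ∈ S.L w →
        ∃ v, S.R a w v ∧ φ ∈ S.L v) ∧
    -- H5
    (∀ (a : ℕ) (φ : Fml), Fml.box (.atom a) φ ∈ S.L w →
        ∀ v, S.R a w v → φ ∈ S.L v) ∧
    -- H6
    (∀ (α : Prg) (φ : Fml), Fml.dia (.star α) φ ∈ S.L w →
        FulfillingChain S φ (.star α) w)

/-!
A model `M` yields a Hintikka structure by labelling every world with the formulae true
there; a fulfilling chain for a true `⟨β⟩φ` is read off a witnessing `β`-path by unfolding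
`β` along `⇝`.

Conversely, a Hintikka structure `S` becomes a model by making `p` true exactly where `p` is
in the label. By induction on NNF formulae, every labelled formula is true and every formula
whose `nneg` is labelled is false. Boxes are pushed along program relations by H2, H3 and H5.
A labelled `⟨α*⟩χ` is made true by walking its fulfilling chain backwards: every formula on
it has the form `⟨β₁⟩…⟨β_m⟩χ` where the `βᵢ` contain only tests occurring in `α`, so the
tests met on the way are already covered by the induction hypothesis.
-/

open Relation

mutual
theorem nnf_of_isNNF {φ : Fml} : IsNNF φ → nnf φ = φ
  | .atom _ | .natom _ => rfl
  | .and h₁ h₂ | .or h₁ h₂ => by rw [nnf, nnf_of_isNNF h₁, nnf_of_isNNF h₂]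
  | .dia hα hφ | .box hα hφ => by rw [nnf, nnfp_of_isNNFp hα, nnf_of_isNNF hφ]
theorem nnfp_of_isNNFp {α : Prg} : IsNNFp α → nnfp α = α
  | .atom _ => rfl
  | .seq h₁ h₂ | .union h₁ h₂ => by rw [nnfp, nnfp_of_isNNFp h₁, nnfp_of_isNNFp h₂]
  | .star h => by rw [nnfp, nnfp_of_isNNFp h]
  | .test h => by rw [nnfp, nnf_of_isNNF h]
end

namespace Model

variable (M : Model)

mutual
theorem sat_nnf : (ψ : Fml) → ∀ w : M.W, M.sat w (nnf ψ) ↔ M.sat w ψ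
  | .atom _, _ => Iff.rfl
  | .neg φ, w => by simp only [nnf, sat, sat_nneg φ w]
  | .and φ ψ, w | .or φ ψ, w => by simp only [nnf, sat, sat_nnf φ w, sat_nnf ψ w]
  | .dia α φ, w | .box α φ, w => by simp only [nnf, sat, rel_nnfp α w, sat_nnf φ]
theorem sat_nneg : (ψ : Fml) → ∀ w : M.W, M.sat w (nneg ψ) ↔ ¬ M.sat w ψ
  | .atom _, _ => Iff.rfl
  | .neg φ, w => by simp only [nneg, sat, sat_nnf φ w, not_not]
  | .and φ ψ, w => by simp only [nneg, sat, sat_nneg φ w, sat_nneg ψ w, not_and_or]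
  | .or φ ψ, w => by simp only [nneg, sat, sat_nneg φ w, sat_nneg ψ w, not_or]
  | .dia α φ, w => by simp only [nneg, sat, rel_nnfp α w, sat_nneg φ, not_exists, not_and]
  | .box α φ, w => by simp only [nneg, sat, rel_nnfp α w, sat_nneg φ, not_forall, exists_prop]
theorem rel_nnfp : (α : Prg) → ∀ u v : M.W, M.rel (nnfp α) u v ↔ M.rel α u v
  | .atom _, _, _ => Iff.rfl
  | .seq α β, u, v => by simp only [nnfp, rel, rel_nnfp α u, rel_nnfp β]
  | .union α β, u, v => by simp only [nnfp, rel, rel_nnfp α u v, rel_nnfp β u v]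
  | .star α, u, v => by simp only [nnfp, rel, rel_nnfp α]
  | .test φ, u, v => by simp only [nnfp, rel, sat_nnf φ u]
end

end Model

theorem Pre.sizeOf_le {φ ψ : Fml} (h : Pre φ ψ) : sizeOf φ ≤ sizeOf ψ := by
  induction h with
  | base => exact le_rfl
  | dia α _ ih => simp only [Fml.dia.sizeOf_spec]; omega

theorem Pre.dia_ne {φ χ : Fml} (h : Pre φ χ) (α : Prg) : Fml.dia α χ ≠ φ := by
  intro heq
  have := h.sizeOf_le
  rw [← heq, Fml.dia.sizeOf_spec] at this
  omega

theorem Red.ne_dia_atom {ψ ψ' : Fml} (h : Red ψ ψ') (a : ℕ) (χ : Fml) :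
    ψ ≠ .dia (.atom a) χ := by
  rintro rfl
  cases h

namespace Str

variable {S : Str}

inductive ChainMove (S : Str) : S.W × Fml → S.W × Fml → Prop
  | atom {a : ℕ} {u v : S.W} {χ : Fml} : S.R a u v → ChainMove S (u, .dia (.atom a) χ) (v, χ)
  | red {u : S.W} {ψ ψ' : Fml} : Red ψ ψ' → ChainMove S (u, ψ) (u, ψ')

theorem chainMove_iff {u v : S.W} {ψ ψ' : Fml} :
    S.ChainMove (u, ψ) (v, ψ') ↔
      (∀ (a : ℕ) (χ : Fml), ψ = .dia (.atom a) χ → ψ' = χ ∧ S.R a u v) ∧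
      ((∀ (a : ℕ) (χ : Fml), ψ ≠ .dia (.atom a) χ) → Red ψ ψ' ∧ u = v) := by
  constructor
  · rintro (⟨hR⟩ | ⟨hred⟩)
    · exact ⟨fun a χ h => by cases h; exact ⟨rfl, hR⟩, fun h => absurd rfl (h _ _)⟩
    · exact ⟨fun a χ h => absurd h (hred.ne_dia_atom a χ), fun _ => ⟨hred, rfl⟩⟩
  · rintro ⟨hatom, hnonatom⟩
    by_cases h : ∃ a χ, ψ = .dia (.atom a) χ
    · obtain ⟨a, χ, rfl⟩ := h
      obtain ⟨rfl, hR⟩ := hatom a χ rfl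
      exact .atom hR
    · push Not at h
      obtain ⟨hred, rfl⟩ := hnonatom h
      exact .red hred

def ChainStep (S : Str) (φ : Fml) (p q : S.W × Fml) : Prop :=
  Pre φ p.2 ∧ p.2 ∈ S.L p.1 ∧ p.2 ≠ φ ∧ S.ChainMove p q

theorem chainStep_dia {φ χ : Fml} {α : Prg} {w : S.W} {q : S.W × Fml} (hχ : Pre φ χ)
    (hmem : .dia α χ ∈ S.L w) (hmove : S.ChainMove (w, .dia α χ) q) :
    S.ChainStep φ (w, .dia α χ) q :=
  ⟨.dia α hχ, hmem, hχ.dia_ne α, hmove⟩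

def ChainFrom (S : Str) (φ : Fml) (p : S.W × Fml) : Prop :=
  ∃ (n : ℕ) (ws : ℕ → S.W) (ψs : ℕ → Fml),
    (∀ i ≤ n, Pre φ (ψs i) ∧ ψs i ∈ S.L (ws i)) ∧
    ws 0 = p.1 ∧ ψs 0 = p.2 ∧ ψs n = φ ∧ (∀ i < n, ψs i ≠ φ) ∧
    (∀ i < n,
      (∀ (a : ℕ) (χ : Fml), ψs i = Fml.dia (.atom a) χ →
          ψs (i+1) = χ ∧ S.R a (ws i) (ws (i+1))) ∧
      ((∀ (a : ℕ) (χ : Fml), ψs i ≠ Fml.dia (.atom a) χ) →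
          Red (ψs i) (ψs (i+1)) ∧ ws i = ws (i+1)))

theorem fulfillingChain_iff {φ : Fml} {β : Prg} {w : S.W} :
    FulfillingChain S φ β w ↔ S.ChainFrom φ (w, .dia β φ) := Iff.rfl

theorem ChainFrom.reflTransGen {φ : Fml} {p : S.W × Fml} (h : S.ChainFrom φ p) :
    ∃ v, ReflTransGen (S.ChainStep φ) p (v, φ) ∧ φ ∈ S.L v := by
  obtain ⟨n, ws, ψs, hlab, hw, hψ, hn, hne, hmove⟩ := h
  have hsteps : ∀ i ∈ Set.Ico 0 n, S.ChainStep φ (ws i, ψs i) (ws (i+1), ψs (i+1)) :=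
    fun i hi =>
      ⟨(hlab i hi.2.le).1, (hlab i hi.2.le).2, hne i hi.2, chainMove_iff.2 (hmove i hi.2)⟩
  have hpath : ReflTransGen (S.ChainStep φ) (ws 0, ψs 0) (ws n, ψs n) :=
    (reflTransGen_of_succ_of_le _ hsteps n.zero_le).lift (fun i => (ws i, ψs i)) fun _ _ h => h
  refine ⟨ws n, ?_, hn ▸ (hlab n le_rfl).2⟩
  rwa [hw, hψ, hn] at hpath

theorem chainFrom_of_reflTransGen {φ : Fml} {p : S.W × Fml} {v : S.W}
    (hpath : ReflTransGen (S.ChainStep φ) p (v, φ)) (hv : φ ∈ S.L v) : S.ChainFrom φ p := by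
  induction hpath using ReflTransGen.head_induction_on with
  | refl => exact ⟨0, fun _ => v, fun _ => φ, fun _ _ => ⟨.base, hv⟩, rfl, rfl, rfl,
      fun _ h => absurd h (Nat.not_lt_zero _), fun _ h => absurd h (Nat.not_lt_zero _)⟩
  | @head p q hstep _ ih =>
    obtain ⟨hpre, hmem, hne, hmove⟩ := hstep
    obtain ⟨n, ws, ψs, hlab, hw, hψ, hn, hne', hmove'⟩ := ih
    refine ⟨n + 1, fun | 0 => p.1 | i + 1 => ws i, fun | 0 => p.2 | i + 1 => ψs i,
      ?_, rfl, rfl, hn, ?_, ?_⟩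
    · rintro (_ | i) hi
      exacts [⟨hpre, hmem⟩, hlab i (by omega)]
    · rintro (_ | i) hi
      exacts [hne, hne' i (by omega)]
    · rintro (_ | i) hi
      · obtain rfl : q = (ws 0, ψs 0) := Prod.ext hw.symm hψ.symm
        exact chainMove_iff.1 hmove
      · exact hmove' i (by omega)

end Str

namespace Model

variable (M : Model)

def toStr : Str := ⟨M.W, M.R, fun w => {ψ | M.sat w ψ}⟩

variable {M}

theorem chain_of_rel {φ : Fml} : (α : Prg) → ∀ {w v : M.W} {χ : Fml}, M.rel α w v → Pre φ χ →
    M.sat v χ → ReflTransGen (M.toStr.ChainStep φ) (w, .dia α χ) (v, χ)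
  | .atom _, _, v, _, hr, hχ, hv => .single (Str.chainStep_dia hχ ⟨v, hr, hv⟩ (.atom hr))
  | .seq α β, w, v, χ, ⟨u, hα, hβ⟩, hχ, hv =>
    have hu : M.sat u (.dia β χ) := ⟨v, hβ, hv⟩
    .head (Str.chainStep_dia hχ ⟨v, ⟨u, hα, hβ⟩, hv⟩ (.red (.seq α β χ)))
      ((chain_of_rel α hα (.dia β hχ) hu).trans (chain_of_rel β hβ hχ hv))
  | .union α β, w, v, χ, .inl hα, hχ, hv =>
    .head (Str.chainStep_dia hχ ⟨v, .inl hα, hv⟩ (.red (.unionL α β χ)))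
      (chain_of_rel α hα hχ hv)
  | .union α β, w, v, χ, .inr hβ, hχ, hv =>
    .head (Str.chainStep_dia hχ ⟨v, .inr hβ, hv⟩ (.red (.unionR α β χ)))
      (chain_of_rel β hβ hχ hv)
  | .star α, w, v, χ, hr, hχ, hv => by
    induction hr using ReflTransGen.head_induction_on with
    | refl => exact .single (Str.chainStep_dia hχ ⟨v, .refl, hv⟩ (.red (.star1 α χ)))
    | @head w u hα hstar ih =>
      have hu : M.sat u (.dia (.star α) χ) := ⟨v, hstar, hv⟩
      exact .head (Str.chainStep_dia hχ ⟨v, .head hα hstar, hv⟩ (.red (.star2 α χ)))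
        ((chain_of_rel α hα (.dia _ hχ) hu).trans ih)
  | .test θ, w, _, χ, ⟨rfl, hθ⟩, hχ, hv =>
    .single (Str.chainStep_dia hχ ⟨w, ⟨rfl, hθ⟩, hv⟩ (.red (.test θ χ)))

theorem fulfillingChain_toStr {w : M.W} {β : Prg} {φ : Fml} (h : M.sat w (.dia β φ)) :
    FulfillingChain M.toStr φ β w := by
  obtain ⟨v, hr, hv⟩ := h
  exact Str.chainFrom_of_reflTransGen (chain_of_rel β hr .base hv) hv

theorem hintikka_toStr : Hintikka M.toStr := fun w =>
  ⟨fun _ hneg hp => hneg hp,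
   fun _ _ h => h,
   fun _ _ _ h => ⟨fun v hv => h v (.inl hv), fun v hv => h v (.inr hv)⟩,
   fun _ _ h => ⟨h w .refl, fun _ hu v hv => h v (.head hu hv)⟩,
   fun _ _ ⟨_, ⟨rfl, hψ⟩, hφ⟩ => ⟨hφ, hψ⟩,
   fun _ _ _ ⟨v, ⟨u, hα, hβ⟩, hv⟩ => ⟨u, hα, v, hβ, hv⟩,
   fun _ _ _ h u hu v hv => h v ⟨u, hu, hv⟩,
   fun _ _ h => h,
   fun _ _ _ ⟨v, hr, hv⟩ => hr.imp (fun h => ⟨v, h, hv⟩) (fun h => ⟨v, h, hv⟩),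
   fun _ _ ⟨v, hr, hv⟩ => by
     rcases ReflTransGen.cases_head hr with rfl | ⟨u, hu, huv⟩
     exacts [.inl hv, .inr ⟨u, hu, v, huv, hv⟩],
   fun ψ _ h => (em (M.sat w ψ)).symm.imp (M.sat_nneg ψ w).2 fun hψ => h w ⟨rfl, hψ⟩,
   fun _ _ h => h,
   fun _ _ h => h,
   fun _ _ => fulfillingChain_toStr⟩

end Model

def Prg.AllTests (Q : Fml → Prop) : Prg → Prop
  | .atom _ => True
  | .seq α β | .union α β => α.AllTests Q ∧ β.AllTests Q
  | .star α => α.AllTests Q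
  | .test θ => Q θ

inductive Prefixed (P : Prg → Prop) (χ : Fml) : Fml → Prop
  | base : Prefixed P χ χ
  | dia {β : Prg} {ξ : Fml} : P β → Prefixed P χ ξ → Prefixed P χ (.dia β ξ)

namespace Prefixed

variable {P : Prg → Prop} {χ : Fml}

theorem of_dia {β : Prg} {ξ : Fml} (h : Prefixed P χ (.dia β ξ)) (hne : .dia β ξ ≠ χ) :
    P β ∧ Prefixed P χ ξ := by
  cases h with
  | base => exact absurd rfl hne
  | dia hβ hξ => exact ⟨hβ, hξ⟩

theorem of_red {Q : Fml → Prop} {ψ ψ' : Fml} (hred : Red ψ ψ')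
    (h : Prefixed (Prg.AllTests Q) χ ψ) (hne : ψ ≠ χ) : Prefixed (Prg.AllTests Q) χ ψ' := by
  cases hred with
  | seq =>
    obtain ⟨⟨hα, hβ⟩, hξ⟩ := h.of_dia hne
    exact .dia hα (.dia hβ hξ)
  | unionL => exact .dia (h.of_dia hne).1.1 (h.of_dia hne).2
  | unionR => exact .dia (h.of_dia hne).1.2 (h.of_dia hne).2
  | star1 | test => exact (h.of_dia hne).2
  | star2 =>
    obtain ⟨hα, hξ⟩ := h.of_dia hne
    exact .dia hα (.dia hα hξ)

end Prefixed

theorem Model.sat_of_red (M : Model) {w : M.W} {ψ ψ' : Fml} (hred : Red ψ ψ') (h : M.sat w ψ')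
    (htest : ∀ θ ξ, ψ = .dia (.test θ) ξ → M.sat w θ) : M.sat w ψ := by
  cases hred with
  | seq =>
    obtain ⟨u, hα, v, hβ, hv⟩ := h
    exact ⟨v, ⟨u, hα, hβ⟩, hv⟩
  | unionL => obtain ⟨v, hr, hv⟩ := h; exact ⟨v, .inl hr, hv⟩
  | unionR => obtain ⟨v, hr, hv⟩ := h; exact ⟨v, .inr hr, hv⟩
  | star1 => exact ⟨w, .refl, h⟩
  | star2 =>
    obtain ⟨u, hu, v, huv, hv⟩ := h
    exact ⟨v, .head hu huv, hv⟩
  | test θ => exact ⟨w, ⟨rfl, htest θ _ rfl⟩, h⟩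

namespace Str

variable (S : Str)

def toModel : Model := ⟨S.W, S.R, fun p w => .atom p ∈ S.L w⟩

-- The negative half is needed for boxes of tests: `[θ?]ξ` only gives `nneg θ` or `ξ` (H3).
def Truthful (ψ : Fml) : Prop :=
  (∀ w, ψ ∈ S.L w → S.toModel.sat w ψ) ∧ (∀ w, nneg ψ ∈ S.L w → ¬ S.toModel.sat w ψ)

variable {S}

theorem sat_of_reflTransGen (hH : Hintikka S) {χ : Fml} {v : S.W}
    (hχ : ∀ u, χ ∈ S.L u → S.toModel.sat u χ) (hv : χ ∈ S.L v) {p : S.W × Fml}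
    (hpath : ReflTransGen (S.ChainStep χ) p (v, χ))
    (hp : Prefixed (Prg.AllTests S.Truthful) χ p.2) : S.toModel.sat p.1 p.2 := by
  induction hpath using ReflTransGen.head_induction_on with
  | refl => exact hχ v hv
  | head hstep _ ih =>
    obtain ⟨-, hmem, hne, hmove⟩ := hstep
    cases hmove with
    | atom hR => exact ⟨_, hR, ih (hp.of_dia hne).2⟩
    | red hred =>
      refine S.toModel.sat_of_red hred (ih (hp.of_red hred hne)) ?_
      rintro θ ξ rfl
      obtain ⟨-, -, -, -, hdiatest, -⟩ := hH _
      exact (hp.of_dia hne).1.1 _ (hdiatest θ ξ hmem).2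

theorem sat_dia_of_mem (hH : Hintikka S) : (α : Prg) → α.AllTests S.Truthful → ∀ {χ : Fml},
    (∀ u, χ ∈ S.L u → S.toModel.sat u χ) → ∀ {w : S.W}, .dia α χ ∈ S.L w →
    S.toModel.sat w (.dia α χ)
  | .atom a, _, χ, hχ, w, hm => by
    obtain ⟨-, -, -, -, -, -, -, -, -, -, -, hdiaatom, -⟩ := hH w
    obtain ⟨v, hR, hv⟩ := hdiaatom a χ hm
    exact ⟨v, hR, hχ v hv⟩
  | .seq α β, ⟨hα, hβ⟩, χ, hχ, w, hm => by
    obtain ⟨-, -, -, -, -, hdiaseq, -⟩ := hH w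
    obtain ⟨u, hu, v, hv, hχv⟩ :=
      sat_dia_of_mem hH α hα (fun _ => sat_dia_of_mem hH β hβ hχ) (hdiaseq α β χ hm)
    exact ⟨v, ⟨u, hu, hv⟩, hχv⟩
  | .union α β, ⟨hα, hβ⟩, χ, hχ, w, hm => by
    obtain ⟨-, -, -, -, -, -, -, -, hdiaunion, -⟩ := hH w
    rcases hdiaunion α β χ hm with h | h
    · obtain ⟨v, hr, hv⟩ := sat_dia_of_mem hH α hα hχ h
      exact ⟨v, .inl hr, hv⟩
    · obtain ⟨v, hr, hv⟩ := sat_dia_of_mem hH β hβ hχ h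
      exact ⟨v, .inr hr, hv⟩
  | .star α, hα, χ, hχ, w, hm => by
    obtain ⟨-, -, -, -, -, -, -, -, -, -, -, -, -, hstar⟩ := hH w
    obtain ⟨v, hpath, hv⟩ := (fulfillingChain_iff.1 (hstar α χ hm)).reflTransGen
    exact sat_of_reflTransGen hH hχ hv hpath (.dia hα .base)
  | .test θ, hθ, χ, hχ, w, hm => by
    obtain ⟨-, -, -, -, hdiatest, -⟩ := hH w
    obtain ⟨hχw, hθw⟩ := hdiatest θ χ hm
    exact ⟨w, ⟨rfl, hθ.1 w hθw⟩, hχ w hχw⟩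

theorem mem_of_box_mem (hH : Hintikka S) :
    (α : Prg) → α.AllTests S.Truthful → ∀ {ξ : Fml} {w v : S.W},
    .box α ξ ∈ S.L w → S.toModel.rel α w v → ξ ∈ S.L v
  | .atom a, _, ξ, w, v, hm, hr => by
    obtain ⟨-, -, -, -, -, -, -, -, -, -, -, -, hboxatom, -⟩ := hH w
    exact hboxatom a ξ hm v hr
  | .seq α β, ⟨hα, hβ⟩, ξ, w, v, hm, ⟨u, hu, hv⟩ => by
    obtain ⟨-, -, -, -, -, -, hboxseq, -⟩ := hH w
    exact mem_of_box_mem hH β hβ (mem_of_box_mem hH α hα (hboxseq α β ξ hm) hu) hv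
  | .union α β, ⟨hα, hβ⟩, ξ, w, v, hm, hr => by
    obtain ⟨-, -, hboxunion, -⟩ := hH w
    rcases hr with hr | hr
    exacts [mem_of_box_mem hH α hα (hboxunion α β ξ hm).1 hr,
      mem_of_box_mem hH β hβ (hboxunion α β ξ hm).2 hr]
  | .star α, hα, ξ, w, v, hm, hr => by
    have hv : .box (.star α) ξ ∈ S.L v := by
      induction hr with
      | refl => exact hm
      | @tail u _ _ hr ih =>
        obtain ⟨-, -, -, hboxstar, -⟩ := hH u
        exact mem_of_box_mem hH α hα (hboxstar α ξ ih).2 hr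
    obtain ⟨-, -, -, hboxstar, -⟩ := hH v
    exact (hboxstar α ξ hv).1
  | .test θ, hθ, ξ, w, _, hm, ⟨rfl, hθw⟩ => by
    obtain ⟨-, -, -, -, -, -, -, -, -, -, hboxtest, -⟩ := hH w
    exact (hboxtest θ ξ hm).resolve_left fun h => hθ.2 w h hθw

mutual
theorem truthful_of_isNNF (hH : Hintikka S) {ψ : Fml} : IsNNF ψ → S.Truthful ψ
  | .atom p => ⟨fun _ h => h, fun w hneg hp => (hH w).1 p hneg hp⟩
  | .natom p => ⟨fun w hneg hp => (hH w).1 p hneg hp, fun _ hp hneg => hneg hp⟩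
  | .and hφ hψ => by
    have ihφ := truthful_of_isNNF hH hφ
    have ihψ := truthful_of_isNNF hH hψ
    refine ⟨fun w hm => ?_, fun w hm hs => ?_⟩
    · obtain ⟨-, hand, -⟩ := hH w
      exact ⟨ihφ.1 w (hand _ _ hm).1, ihψ.1 w (hand _ _ hm).2⟩
    · obtain ⟨-, -, -, -, -, -, -, hor, -⟩ := hH w
      rcases hor _ _ hm with h | h
      exacts [ihφ.2 w h hs.1, ihψ.2 w h hs.2]
  | .or hφ hψ => by
    have ihφ := truthful_of_isNNF hH hφ
    have ihψ := truthful_of_isNNF hH hψ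
    refine ⟨fun w hm => ?_, fun w hm hs => ?_⟩
    · obtain ⟨-, -, -, -, -, -, -, hor, -⟩ := hH w
      exact (hor _ _ hm).imp (ihφ.1 w) (ihψ.1 w)
    · obtain ⟨-, hand, -⟩ := hH w
      rcases hs with h | h
      exacts [ihφ.2 w (hand _ _ hm).1 h, ihψ.2 w (hand _ _ hm).2 h]
  | .dia hα hφ => by
    have ihα := allTests_of_isNNFp hH hα
    have ihφ := truthful_of_isNNF hH hφ
    refine ⟨fun _ => sat_dia_of_mem hH _ ihα ihφ.1, fun w hm ⟨v, hr, hv⟩ => ?_⟩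
    rw [nneg, nnfp_of_isNNFp hα] at hm
    exact ihφ.2 v (mem_of_box_mem hH _ ihα hm hr) hv
  | .box hα hφ => by
    have ihα := allTests_of_isNNFp hH hα
    have ihφ := truthful_of_isNNF hH hφ
    refine ⟨fun w hm v hr => ihφ.1 v (mem_of_box_mem hH _ ihα hm hr), fun w hm hs => ?_⟩
    rw [nneg, nnfp_of_isNNFp hα] at hm
    have hneg : ∀ u, nneg _ ∈ S.L u → S.toModel.sat u (nneg _) :=
      fun u hu => (S.toModel.sat_nneg _ u).2 (ihφ.2 u hu)
    obtain ⟨v, hr, hv⟩ := sat_dia_of_mem hH _ ihα hneg hm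
    exact (S.toModel.sat_nneg _ v).1 hv (hs v hr)
theorem allTests_of_isNNFp (hH : Hintikka S) {α : Prg} : IsNNFp α → α.AllTests S.Truthful
  | .atom _ => trivial
  | .seq hα hβ | .union hα hβ => ⟨allTests_of_isNNFp hH hα, allTests_of_isNNFp hH hβ⟩
  | .star hα => (allTests_of_isNNFp hH hα :)
  | .test hθ => truthful_of_isNNF hH hθ
end

end Str

theorem satisfiable_iff_hintikka (φ : Fml) (hnnf : IsNNF φ) :
    (∃ (M : Model) (w : M.W), M.sat w φ) ↔
    (∃ S : Str, Hintikka S ∧ ∃ v : S.W, φ ∈ S.L v) := by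
  constructor
  · rintro ⟨M, w, hw⟩
    exact ⟨M.toStr, M.hintikka_toStr, w, hw⟩
  · rintro ⟨S, hH, v, hv⟩
    exact ⟨S.toModel, v, (Str.truthful_of_isNNF hH hnnf).1 v hv⟩
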